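/- arXiv:2209.02026 — 6 statements merged into one kernel-verified Lean document; each statement's English description precedes it below -/
import Mathlib

section
/- For every real number t with 0 ≤ t ≤ 27/256, there exists a unique real number x in the closed interval [1, 4/3] such that x = 1 + t·x⁴. -/
lemma melonic_uniq_aux (t a b : ℝ) (ht0 : 0 ≤ t) (ht1 : t ≤ 27 / 256)
    (ha1 : 1 ≤ a) (ha2 : a ≤ 4/3) (hb1 : 1 ≤ b) (hb2 : b ≤ 4/3)
    (hea : a = 1 + t * a ^ 4) (heb : b = 1 + t * b ^ 4) : a = b := by
  by_contra h
  have hd : (a - b)^2 > 0 := by have := sub_ne_zero_of_ne h; positivity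
  have key : a - b = t * (a - b) * ((a + b) * (a^2 + b^2)) := by nlinarith [sq_nonneg a, sq_nonneg b]
  have h2 : t * ((a + b) * (a^2 + b^2)) = 1 := by
    have := sub_ne_zero_of_ne h
    field_simp at key
    nlinarith [sq_nonneg (a-b), mul_self_nonneg (a-b)]
  nlinarith [mul_nonneg ht0 (sq_nonneg (a-b)), sq_nonneg (a+b-8/3), mul_pos (mul_pos (lt_of_lt_of_le one_pos ha1) (lt_of_lt_of_le one_pos hb1)) one_pos, sq_nonneg (a-b), mul_nonneg (mul_nonneg ht0 (sub_nonneg.2 ha2)) (sub_nonneg.2 hb2)]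

/-- For every real `t` with `0 ≤ t ≤ 27/256`, there is a unique `x ∈ [1, 4/3]`
with `x = 1 + t·x⁴`. -/
theorem melonic_unique_solution (t : ℝ) (ht0 : 0 ≤ t) (ht1 : t ≤ 27 / 256) :
    ∃! x : ℝ, x ∈ Set.Icc (1 : ℝ) (4 / 3) ∧ x = 1 + t * x ^ 4 := by
  have hcont : ContinuousOn (fun x : ℝ => x - t * x ^ 4) (Set.Icc 1 (4/3)) := by
    fun_prop
  have h1 : (1 : ℝ) ∈ Set.Icc ((fun x : ℝ => x - t * x ^ 4) 1) ((fun x : ℝ => x - t * x ^ 4) (4/3)) := by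
    constructor <;> simp <;> nlinarith
  obtain ⟨x, hx, hfx⟩ := intermediate_value_Icc (by norm_num : (1:ℝ) ≤ 4/3) hcont h1
  refine ⟨x, ⟨hx, by dsimp at hfx; linarith⟩, ?_⟩
  rintro y ⟨⟨hy1, hy2⟩, hye⟩
  exact melonic_uniq_aux t y x ht0 ht1 hy1 hy2 hx.1 hx.2 hye (by dsimp at hfx; linarith)
end

section
/- Let m : ℝ → ℝ be any function such that for every t ∈ [0, 27/256] one has m(t) ∈ [1, 4/3] and m(t) = 1 + t·m(t)⁴. Then (4/3 − m(t))/√(1 − 256t/27) tends to √(8/27) as t tends to 27/256 from the left; that is, the melonic generating function has the square-root singular behavior M(t) ∼ 4/3 − √(8/27)·√(1 − t/t_c) near its critical point t_c = 27/256. -/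
/-!
Eliminating `t = (M - 1) / M⁴` gives `(1 - 256 t / 27) · 27 M⁴ = (4 - 3M)² (3M² + 8M + 16)`.
Since `M ≤ 4/3`, the square root of this identity expresses the quotient exactly as
`√(3M⁴ / (3M² + 8M + 16))`, a continuous function of `M` whose value at `4/3` is `√(8/27)`.
The same identity bounds `4/3 - M` by `(16/27) √(1 - 256 t / 27)`, so `M → 4/3` as `t → 27/256`.
-/

open Filter Real Set Topology

theorem melonic_gap_factorization {t M : ℝ} (h : M = 1 + t * M ^ 4) :
    (1 - 256 * t / 27) * (27 * M ^ 4) = (4 - 3 * M) ^ 2 * (3 * M ^ 2 + 8 * M + 16) := by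
  linear_combination 256 * h

theorem four_thirds_sub_le_sqrt {t M : ℝ} (hM : M ∈ Icc (1 : ℝ) (4 / 3))
    (h : M = 1 + t * M ^ 4) : 4 / 3 - M ≤ 16 / 27 * √(1 - 256 * t / 27) := by
  have hgap := melonic_gap_factorization h
  obtain ⟨h1, h2⟩ := hM
  have hs : 0 ≤ 1 - 256 * t / 27 := by
    have : 0 ≤ (1 - 256 * t / 27) * (27 * M ^ 4) := hgap ▸ by positivity
    exact nonneg_of_mul_nonneg_left this (by positivity)
  have hM4 : M ^ 4 ≤ (4 / 3) ^ 4 := by gcongr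
  have hq : 27 ≤ 3 * M ^ 2 + 8 * M + 16 := by nlinarith
  have hsq : (27 / 16 * (4 / 3 - M)) ^ 2 ≤ 1 - 256 * t / 27 := by
    nlinarith [mul_le_mul_of_nonneg_left hM4 hs,
      mul_le_mul_of_nonneg_left hq (sq_nonneg (4 - 3 * M))]
  have := (Real.le_sqrt (by linarith) hs).2 hsq
  linarith

theorem four_thirds_sub_div_sqrt_eq {t M : ℝ} (hM : M ≤ 4 / 3) (ht : t < 27 / 256)
    (h : M = 1 + t * M ^ 4) :
    (4 / 3 - M) / √(1 - 256 * t / 27) = √(3 * M ^ 4 / (3 * M ^ 2 + 8 * M + 16)) := by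
  have hs : 0 < 1 - 256 * t / 27 := by linarith
  have hq : 0 < 3 * M ^ 2 + 8 * M + 16 := by nlinarith [sq_nonneg (M + 4 / 3)]
  rw [← Real.sqrt_sq (by linarith : 0 ≤ 4 / 3 - M), ← Real.sqrt_div' _ hs.le]
  congr 1
  rw [div_eq_div_iff hs.ne' hq.ne']
  linear_combination (-1 / 9) * melonic_gap_factorization h

theorem tendsto_four_thirds_of_melonic {α : Type*} {l : Filter α} {t M : α → ℝ}
    (ht : Tendsto t l (𝓝 (27 / 256)))
    (hM : ∀ᶠ a in l, M a ∈ Icc (1 : ℝ) (4 / 3) ∧ M a = 1 + t a * M a ^ 4) :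
    Tendsto M l (𝓝 (4 / 3)) := by
  have hs : Tendsto (fun a => 1 - 256 * t a / 27) l (𝓝 0) := by
    convert tendsto_const_nhds (x := (1 : ℝ)).sub ((ht.const_mul 256).div_const 27) using 2
    norm_num
  have hlow : Tendsto (fun a => 4 / 3 - 16 / 27 * √(1 - 256 * t a / 27)) l (𝓝 (4 / 3)) := by
    simpa using tendsto_const_nhds.sub (hs.sqrt.const_mul (16 / 27))
  refine tendsto_of_tendsto_of_tendsto_of_le_of_le' hlow tendsto_const_nhds ?_ ?_
  · filter_upwards [hM] with a ⟨hMa, hfix⟩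
    linarith [four_thirds_sub_le_sqrt hMa hfix]
  · filter_upwards [hM] with a ⟨hMa, _⟩
    exact hMa.2

/-- Square-root singular behavior of the melonic generating function at `t_c = 27/256`:
if `m t ∈ [1, 4/3]` and `m t = 1 + t·(m t)⁴` on `[0, 27/256]`, then
`(4/3 − m t) / √(1 − 256·t/27) → √(8/27)` as `t → (27/256)⁻`. -/
theorem melonic_sqrt_singularity (m : ℝ → ℝ)
    (hm : ∀ t ∈ Set.Icc (0 : ℝ) (27 / 256),
      m t ∈ Set.Icc (1 : ℝ) (4 / 3) ∧ m t = 1 + t * (m t) ^ 4) :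
    Filter.Tendsto (fun t : ℝ => (4 / 3 - m t) / Real.sqrt (1 - 256 * t / 27))
      (nhdsWithin (27 / 256) (Set.Iio (27 / 256)))
      (nhds (Real.sqrt (8 / 27))) := by
  have hm' : ∀ᶠ t in 𝓝[<] (27 / 256 : ℝ), t < 27 / 256 ∧
      m t ∈ Icc (1 : ℝ) (4 / 3) ∧ m t = 1 + t * m t ^ 4 := by
    filter_upwards [Ioo_mem_nhdsLT (by norm_num : (0 : ℝ) < 27 / 256)] with t ht
    exact ⟨ht.2, hm t (Ioo_subset_Icc_self ht)⟩
  have hlim : Tendsto m (𝓝[<] (27 / 256)) (𝓝 (4 / 3)) :=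
    tendsto_four_thirds_of_melonic nhdsWithin_le_nhds (hm'.mono fun _ h => h.2)
  have hc : ContinuousAt (fun x : ℝ => √(3 * x ^ 4 / (3 * x ^ 2 + 8 * x + 16))) (4 / 3) := by
    fun_prop (disch := norm_num)
  have hval : √(3 * (4 / 3) ^ 4 / (3 * (4 / 3) ^ 2 + 8 * (4 / 3) + 16)) = √(8 / 27 : ℝ) := by
    norm_num
  refine hval ▸ Tendsto.congr' ?_ (hc.tendsto.comp hlim)
  filter_upwards [hm'] with t ⟨ht, hmt, hfix⟩
  exact (four_thirds_sub_div_sqrt_eq hmt.2 ht hfix).symm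
end

section
/- Let m : ℝ → ℝ be any function such that for every t ∈ [0, 27/256] one has m(t) ∈ [1, 4/3] and m(t) = 1 + t·m(t)⁴, set u(t) = m(t) − 1 and B(t) = (4 − 6u(t))·u(t)² / ((1 − u(t))(1 − 2u(t))(1 − 3u(t))). Then B(t)·√(1 − 256t/27) tends to 1/(3·√(8/27)) = √(3/8) as t tends to 27/256 from the left; i.e. the generating function of broken chains diverges like an inverse square root at the critical point while the other chain generating functions stay finite. -/
/-!
Writing `u = m(t) − 1`, the melonic equation reads `t (1 + u)⁴ = u`, and then
`(1 − 256t/27) · 27 (1 + u)⁴ = (1 − 3u)² (3u² + 14u + 27)`.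
So `√(1 − 256t/27)` carries exactly the simple zero `1 − 3u` of the denominator of `B`,
and `B(t) √(1 − 256t/27)` is a function of `u` continuous at `u = 1/3`. The same identity
bounds `1 − 3u` by a multiple of `√(1 − 256t/27)`, which forces `u → 1/3` as `t → 27/256`.
-/

open Filter Topology Real

namespace Melonic

section Gap

variable {t u : ℝ}

theorem gap_identity (h : t * (1 + u) ^ 4 = u) :
    (1 - 256 * t / 27) * (27 * (1 + u) ^ 4) = (1 - 3 * u) ^ 2 * (3 * u ^ 2 + 14 * u + 27) := by
  linear_combination (-256 : ℝ) * h

theorem sqrt_gap_eq (h : t * (1 + u) ^ 4 = u) (hu₁ : -1 < u) (hu₂ : u ≤ 1 / 3) :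
    √(1 - 256 * t / 27) = (1 - 3 * u) * √(3 * u ^ 2 + 14 * u + 27) / (√27 * (1 + u) ^ 2) := by
  have hQ : 0 ≤ 3 * u ^ 2 + 14 * u + 27 := by nlinarith
  have h1u : 0 < 1 + u := by linarith
  have hpos : 0 < √27 * (1 + u) ^ 2 := by positivity
  have hsq : ((1 - 3 * u) * √(3 * u ^ 2 + 14 * u + 27) / (√27 * (1 + u) ^ 2)) ^ 2
      = 1 - 256 * t / 27 := by
    rw [div_pow, mul_pow, mul_pow, sq_sqrt hQ, sq_sqrt (by norm_num), div_eq_iff (by positivity)]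
    linear_combination (gap_identity h).symm
  rw [← hsq, sqrt_sq (div_nonneg (mul_nonneg (by linarith) (sqrt_nonneg _)) hpos.le)]

theorem one_sub_three_mul_le_sqrt_gap (h : t * (1 + u) ^ 4 = u) (hu₀ : 0 ≤ u) (hu₂ : u ≤ 1 / 3) :
    1 - 3 * u ≤ 16 / 9 * √(1 - 256 * t / 27) := by
  have hpow : (1 + u) ^ 4 ≤ (4 / 3) ^ 4 := pow_le_pow_left₀ (by linarith) (by linarith) 4
  have hgap : 0 ≤ 1 - 256 * t / 27 := by
    nlinarith [gap_identity h, sq_nonneg (1 - 3 * u), pow_pos (by linarith : 0 < 1 + u) 4]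
  rw [show 16 / 9 * √(1 - 256 * t / 27) = √((16 / 9) ^ 2 * (1 - 256 * t / 27)) by
    rw [sqrt_mul (by positivity), sqrt_sq (by norm_num)]]
  rw [le_sqrt (by linarith) (by positivity)]
  nlinarith [gap_identity h, mul_le_mul_of_nonneg_left hpow hgap, sq_nonneg (1 - 3 * u)]

theorem ne_one_third (h : t * (1 + u) ^ 4 = u) (ht : t < 27 / 256) : u ≠ 1 / 3 := by
  rintro rfl
  norm_num at h
  linarith

end Gap

theorem tendsto_one_third {l : Filter ℝ} (hl : l ≤ 𝓝 (27 / 256)) {u : ℝ → ℝ}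
    (hu : ∀ᶠ t in l, 0 ≤ u t ∧ u t ≤ 1 / 3 ∧ t * (1 + u t) ^ 4 = u t) :
    Tendsto u l (𝓝 (1 / 3)) := by
  have hgap : Tendsto (fun t => 16 / 9 * √(1 - 256 * t / 27)) l (𝓝 0) := by
    have hc : ContinuousAt (fun t : ℝ => 16 / 9 * √(1 - 256 * t / 27)) (27 / 256) := by fun_prop
    convert hc.tendsto.mono_left hl using 2
    norm_num
  have hv : Tendsto (fun t => 1 - 3 * u t) l (𝓝 0) :=
    tendsto_of_tendsto_of_tendsto_of_le_of_le' tendsto_const_nhds hgap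
      (hu.mono fun _ h => by linarith [h.2.1])
      (hu.mono fun _ h => one_sub_three_mul_le_sqrt_gap h.2.2 h.1 h.2.1)
  have := (hv.const_sub 1).div_const 3
  simp only [sub_sub_cancel, sub_zero] at this
  exact this.congr fun t => by ring

/-- `B(t) · √(1 − 256t/27)` as a function of `u = m(t) − 1`. -/
noncomputable def scaledBrokenChain (u : ℝ) : ℝ :=
  (4 - 6 * u) * u ^ 2 * √(3 * u ^ 2 + 14 * u + 27) /
    ((1 - u) * (1 - 2 * u) * √27 * (1 + u) ^ 2)

theorem continuousAt_scaledBrokenChain : ContinuousAt scaledBrokenChain (1 / 3) := by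
  unfold scaledBrokenChain
  apply ContinuousAt.div (by fun_prop) (by fun_prop)
  have : 0 < √27 := sqrt_pos.mpr (by norm_num)
  norm_num

theorem scaledBrokenChain_one_third : scaledBrokenChain (1 / 3) = √(3 / 8) := by
  have h32 : √32 * √8 = 16 := by
    rw [← sqrt_mul (by norm_num), show (32 : ℝ) * 8 = 16 ^ 2 by norm_num, sqrt_sq (by norm_num)]
  have h27 : √27 * √3 = 9 := by
    rw [← sqrt_mul (by norm_num), show (27 : ℝ) * 3 = 9 ^ 2 by norm_num, sqrt_sq (by norm_num)]
  have h8 : 0 < √8 := sqrt_pos.mpr (by norm_num)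
  have h27' : 0 < √27 := sqrt_pos.mpr (by norm_num)
  unfold scaledBrokenChain
  norm_num
  rw [div_eq_div_iff (by positivity) h8.ne']
  linear_combination (2 / 9) * h32 - (32 / 81) * h27

theorem brokenChain_mul_sqrt_gap {t u : ℝ} (h : t * (1 + u) ^ 4 = u) (hu₁ : -1 < u)
    (hu₂ : u < 1 / 3) :
    (4 - 6 * u) * u ^ 2 / ((1 - u) * (1 - 2 * u) * (1 - 3 * u)) * √(1 - 256 * t / 27) =
      scaledBrokenChain u := by
  have h1 : 1 - u ≠ 0 := by linarith
  have h2 : 1 - 2 * u ≠ 0 := by linarith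
  have h3 : 1 - 3 * u ≠ 0 := by linarith
  have h4 : 1 + u ≠ 0 := by linarith
  rw [sqrt_gap_eq h hu₁ hu₂.le, scaledBrokenChain]
  field_simp
  rw [div_eq_div_iff (mul_ne_zero (by linarith) (by linarith)) (by linarith)]
  ring

end Melonic

open Melonic

/-- The generating function of broken chains
`B(t) = (4 − 6U)·U² / ((1 − U)(1 − 2U)(1 − 3U))` with `U = m(t) − 1`, where `m` solves
the melonic equation in `[1, 4/3]`, diverges like an inverse square root at `t_c = 27/256`:
`B(t)·√(1 − 256·t/27) → √(3/8)` as `t → (27/256)⁻`. -/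
theorem broken_chain_sqrt_divergence (m : ℝ → ℝ)
    (hm : ∀ t ∈ Set.Icc (0 : ℝ) (27 / 256),
      m t ∈ Set.Icc (1 : ℝ) (4 / 3) ∧ m t = 1 + t * (m t) ^ 4) :
    Filter.Tendsto
      (fun t : ℝ =>
        ((4 - 6 * (m t - 1)) * (m t - 1) ^ 2 /
            ((1 - (m t - 1)) * (1 - 2 * (m t - 1)) * (1 - 3 * (m t - 1)))) *
          Real.sqrt (1 - 256 * t / 27))
      (nhdsWithin (27 / 256) (Set.Iio (27 / 256)))
      (nhds (Real.sqrt (3 / 8))) := by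
  have hu : ∀ᶠ t in 𝓝[<] (27 / 256), t < 27 / 256 ∧
      0 ≤ m t - 1 ∧ m t - 1 ≤ 1 / 3 ∧ t * (1 + (m t - 1)) ^ 4 = m t - 1 := by
    filter_upwards [Ioo_mem_nhdsLT (by norm_num : (0 : ℝ) < 27 / 256)] with t ht
    obtain ⟨⟨hm₁, hm₂⟩, heq⟩ := hm t ⟨ht.1.le, ht.2.le⟩
    exact ⟨ht.2, by linarith, by linarith, by rw [add_sub_cancel]; linarith⟩
  have hlim := continuousAt_scaledBrokenChain.tendsto.comp
    (tendsto_one_third nhdsWithin_le_nhds (hu.mono fun _ h => h.2))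
  rw [scaledBrokenChain_one_third] at hlim
  refine hlim.congr' (hu.mono fun t ⟨ht, hu₀, hu₂, h⟩ => ?_)
  have hu₂' : m t - 1 < 1 / 3 := lt_of_le_of_ne hu₂ (ne_one_third h ht)
  simpa only [sub_sub_eq_add_sub, Function.comp] using
    (brokenChain_mul_sqrt_gap h (by linarith) hu₂').symm
end

section
/- For every real number μ > 0, there exists a unique real number x > 0 satisfying 3x³ − 4x² + μx − 2μ = 0; moreover this unique positive root satisfies 1 < x < 2. -/
/-- For every `μ > 0` there is a unique positive real root of
`3x³ − 4x² + μx − 2μ = 0`, and this root lies in `(1, 2)`. -/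
theorem critical_value_unique_positive_root (μ : ℝ) (hμ : 0 < μ) :
    (∃! x : ℝ, 0 < x ∧ 3 * x ^ 3 - 4 * x ^ 2 + μ * x - 2 * μ = 0) ∧
    (∀ x : ℝ, 0 < x → 3 * x ^ 3 - 4 * x ^ 2 + μ * x - 2 * μ = 0 → 1 < x ∧ x < 2) := by
  have hbound : ∀ x : ℝ, 0 < x → 3 * x ^ 3 - 4 * x ^ 2 + μ * x - 2 * μ = 0 →
      1 < x ∧ x < 2 := by
    intro x hx h0
    constructor
    · by_contra h
      push_neg at h
      nlinarith [mul_pos hx hx, sq_nonneg x, mul_pos (mul_pos hx hx) hx]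
    · by_contra h
      push_neg at h
      nlinarith [sq_nonneg x, mul_pos hx hx]
  have hc : ContinuousOn (fun x : ℝ => 3 * x ^ 3 - 4 * x ^ 2 + μ * x - 2 * μ)
      (Set.Icc 1 2) := by fun_prop
  have hiv := intermediate_value_Ioo (by norm_num : (1:ℝ) ≤ 2) hc
  have h0mem : (0:ℝ) ∈ Set.Ioo (3 * (1:ℝ) ^ 3 - 4 * 1 ^ 2 + μ * 1 - 2 * μ)
      (3 * (2:ℝ) ^ 3 - 4 * 2 ^ 2 + μ * 2 - 2 * μ) := by
    constructor <;> [nlinarith; nlinarith]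
  obtain ⟨x, hx, hfx⟩ := hiv h0mem
  refine ⟨⟨x, ⟨by linarith [hx.1], hfx⟩, ?_⟩, hbound⟩
  rintro y ⟨hy, hfy⟩
  obtain ⟨hy1, hy2⟩ := hbound y hy hfy
  have hx1 := hx.1
  have key : (y - x) * (3 * y ^ 2 + 3 * y * x + 3 * x ^ 2 - 4 * y - 4 * x + μ) = 0 := by
    linear_combination hfy - hfx
  have hpos : 0 < 3 * y ^ 2 + 3 * y * x + 3 * x ^ 2 - 4 * y - 4 * x + μ := by
    nlinarith [sq_nonneg (y - 1), sq_nonneg (x - 1),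
      mul_pos (sub_pos.2 hy1) (sub_pos.2 hx1)]
  have := mul_eq_zero.1 key
  rcases this with h | h
  · linarith
  · linarith
end

section
/- Let μ ≥ 0 and let x > 1 be a real number satisfying 3x³ − 4x² + μx − 2μ = 0. Setting t = (x − 1)/(x⁴ + μx²), one has both x = 1 + t·x⁴ + t·μ·x² and t·(4x³ + 2μx) = 1. In other words, the positive root of the polynomial −3x³ + 4x² − μx + 2μ is exactly the critical value of the melonic equation: it simultaneously solves the melonic fixed-point equation and the criticality (tangency) condition. -/
/-- The positive root of `−3x³ + 4x² − μx + 2μ` is the critical value of the melonic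
equation: setting `t = (x − 1)/(x⁴ + μx²)`, it solves the melonic fixed-point equation
`x = 1 + t·x⁴ + t·μ·x²` together with the criticality condition `t·(4x³ + 2μx) = 1`. -/
theorem critical_root_solves_melonic (μ x : ℝ) (hμ : 0 ≤ μ) (hx : 1 < x)
    (hroot : 3 * x ^ 3 - 4 * x ^ 2 + μ * x - 2 * μ = 0) :
    x = 1 + ((x - 1) / (x ^ 4 + μ * x ^ 2)) * x ^ 4
        + ((x - 1) / (x ^ 4 + μ * x ^ 2)) * μ * x ^ 2 ∧
    ((x - 1) / (x ^ 4 + μ * x ^ 2)) * (4 * x ^ 3 + 2 * μ * x) = 1 := by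
  have hx0 : 0 < x := lt_trans one_pos hx
  have hd : (0:ℝ) < x ^ 4 + μ * x ^ 2 := by positivity
  have hd' : x ^ 4 + μ * x ^ 2 ≠ 0 := ne_of_gt hd
  constructor
  · field_simp
    ring
  · field_simp
    nlinarith [hroot, hx0]
end

section
/- Let g and l be natural numbers and let φ : ℕ → ℕ be finitely supported with φ(0) = 0 (φ(n) being the number of straight cycles of length 2n). Set E = ∑_n 2n·φ(n) and Φ = ∑_n φ(n), and let V be a natural number with 2V = E. If l + 3V + 2Φ = 2 + 2g + 2E (equivalently l/2 = 1 + g + E − (3/2)V − Φ), then ∑_n (n − 2)·φ(n) = l − 2 − 2g as integers; in particular, if g = 0 and l = 0 then φ(1) ≥ 2, i.e. there is at least one straight cycle of length 2. -/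
/-- If `φ n` is the number of straight cycles of length `2n` (finitely supported, with
`φ 0 = 0`), `E = ∑ 2n·φ n`, `Φ = ∑ φ n`, `2V = E`, and the grade relation
`l + 3V + 2Φ = 2 + 2g + 2E` holds, then `∑ (n − 2)·φ n = l − 2 − 2g` as integers;
in particular if `g = 0` and `l = 0` then `φ 1 ≥ 2`. -/
theorem straight_cycle_identity (g l : ℕ) (φ : ℕ →₀ ℕ) (hφ0 : φ 0 = 0)
    (E Φ V : ℕ)
    (hE : E = φ.sum fun n m => 2 * n * m)
    (hΦ : Φ = φ.sum fun _ m => m)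
    (hV : 2 * V = E)
    (hgrade : l + 3 * V + 2 * Φ = 2 + 2 * g + 2 * E) :
    (φ.sum fun n m => ((n : ℤ) - 2) * m) = (l : ℤ) - 2 - 2 * g ∧
    (g = 0 → l = 0 → 2 ≤ φ 1) := by
  set S : ℤ := φ.sum fun n m => ((n : ℤ) - 2) * m with hS
  have h2S : 2 * S = (E : ℤ) - 4 * (Φ : ℤ) := by
    rw [hS, hE, hΦ, Finsupp.sum, Finsupp.sum, Finsupp.sum, Finset.mul_sum]
    push_cast
    rw [Finset.mul_sum, ← Finset.sum_sub_distrib]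
    exact Finset.sum_congr rfl fun n _ => by ring
  have hmain : S = (l : ℤ) - 2 - 2 * g := by
    have hVc : 2 * (V : ℤ) = (E : ℤ) := by exact_mod_cast hV
    have hgc : (l : ℤ) + 3 * V + 2 * Φ = 2 + 2 * g + 2 * E := by exact_mod_cast hgrade
    linarith
  refine ⟨hmain, fun hg hl => ?_⟩
  subst hg hl
  have hS2 : S = -2 := by simpa using hmain
  -- lower bound: S ≥ -(φ 1)
  have hbound : -((φ 1 : ℤ)) ≤ S := by
    by_cases h1 : 1 ∈ φ.support
    · rw [hS, Finsupp.sum, ← Finset.add_sum_erase _ _ h1]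
      have : (0 : ℤ) ≤ ∑ n ∈ φ.support.erase 1, ((n : ℤ) - 2) * φ n := by
        apply Finset.sum_nonneg
        intro n hn
        have hne1 : n ≠ 1 := Finset.ne_of_mem_erase hn
        have hmem := Finset.mem_of_mem_erase hn
        have hne0 : n ≠ 0 := by
          intro h; rw [h] at hmem; exact (Finsupp.mem_support_iff.mp hmem) hφ0
        have : 2 ≤ n := by omega
        have h2n : (2 : ℤ) ≤ (n : ℤ) := by exact_mod_cast this
        exact mul_nonneg (by linarith) (by positivity)
      push_cast
      linarith
    · have : φ 1 = 0 := Finsupp.notMem_support_iff.mp h1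
      rw [this]
      rw [hS, Finsupp.sum]
      simp only [Nat.cast_zero, neg_zero]
      apply Finset.sum_nonneg
      intro n hn
      have hne1 : n ≠ 1 := fun h => h1 (h ▸ hn)
      have hne0 : n ≠ 0 := by
        intro h; rw [h] at hn; exact (Finsupp.mem_support_iff.mp hn) hφ0
      have : 2 ≤ n := by omega
      have h2n : (2 : ℤ) ≤ (n : ℤ) := by exact_mod_cast this
      exact mul_nonneg (by linarith) (by positivity)
  have : (2 : ℤ) ≤ (φ 1 : ℤ) := by linarith [hbound, hS2.le]
  exact_mod_cast this
end
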